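/- arXiv:2208.13492 — 6 statements merged into one kernel-verified Lean document; each statement's English description precedes it below -/
import Mathlib

section
/- Let U = (2Π_A - I)(2Π_B - I) where Π_A, Π_B are orthogonal projectors on a finite-dimensional complex inner product space H, let Θ ∈ (0, π), and let Λ_Θ be the orthogonal projector onto the span of eigenvectors of U with eigenvalue e^{iθ} for |θ| ≤ Θ. Then for any vector ψ_A in the range of Π_A, ‖Λ_Θ (I - Π_B) ψ_A‖ ≤ (Θ/2) ‖ψ_A‖. -/
open scoped InnerProductSpace ComplexConjugate

/-- The orthogonal projection onto a subspace `K`, as an endomorphism of `H`. -/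
noncomputable def projOnto {H : Type*} [NormedAddCommGroup H] [InnerProductSpace ℂ H]
    [FiniteDimensional ℂ H] (K : Submodule ℂ H) : H →L[ℂ] H :=
  K.subtypeL.comp (K.orthogonalProjection)

/-- The orthogonal projector onto the span of the eigenvectors of `U` with eigenvalue
`e^{iφ}` for `|φ| ≤ Θ`. -/
noncomputable def smallPhaseProj {H : Type*} [NormedAddCommGroup H] [InnerProductSpace ℂ H]
    [FiniteDimensional ℂ H] (U : H →L[ℂ] H) (Θ : ℝ) : H →L[ℂ] H :=
  projOnto (Submodule.span ℂ
    {x : H | ∃ φ : ℝ, |φ| ≤ Θ ∧ U x = Complex.exp (φ * Complex.I) • x})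

section Aux

variable {H : Type*} [NormedAddCommGroup H] [InnerProductSpace ℂ H] [FiniteDimensional ℂ H]

lemma projOnto_mem (K : Submodule ℂ H) (x : H) : projOnto K x ∈ K := by
  simp [projOnto]

lemma projOnto_eq_self {K : Submodule ℂ H} {x : H} (h : x ∈ K) : projOnto K x = x := by
  exact Submodule.starProjection_eq_self_iff.2 h

lemma projOnto_inner (K : Submodule ℂ H) (x y : H) :
    ⟪projOnto K x, y⟫_ℂ = ⟪x, projOnto K y⟫_ℂ :=
  K.inner_starProjection_left_eq_right x y

lemma projOnto_norm_le (K : Submodule ℂ H) (x : H) : ‖projOnto K x‖ ≤ ‖x‖ := by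
  have h := (K.orthogonalProjection).le_opNorm x
  have h2 := K.orthogonalProjectionOnto_norm_le
  have : ‖projOnto K x‖ = ‖K.orthogonalProjection x‖ := rfl
  rw [this]
  nlinarith [norm_nonneg x]

lemma refl_inner (K : Submodule ℂ H) (x y : H) :
    ⟪((2:ℂ) • projOnto K - 1) x, y⟫_ℂ = ⟪x, ((2:ℂ) • projOnto K - 1) y⟫_ℂ := by
  simp only [ContinuousLinearMap.sub_apply, ContinuousLinearMap.smul_apply,
    ContinuousLinearMap.one_apply, inner_sub_left, inner_sub_right, inner_smul_left,
    inner_smul_right, projOnto_inner]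
  norm_num [Complex.conj_ofNat]

lemma refl_refl (K : Submodule ℂ H) (x : H) :
    ((2:ℂ) • projOnto K - 1) (((2:ℂ) • projOnto K - 1) x) = x := by
  simp only [ContinuousLinearMap.sub_apply, ContinuousLinearMap.smul_apply,
    ContinuousLinearMap.one_apply, map_sub, map_smul]
  rw [projOnto_eq_self (projOnto_mem K x)]
  module


variable {H : Type*} [NormedAddCommGroup H] [InnerProductSpace ℂ H] [FiniteDimensional ℂ H]

lemma quadform_ge {T : H →ₗ[ℂ] H} (hT : T.IsSymmetric) {K : Submodule ℂ H}
    (hK : ∀ x ∈ K, T x ∈ K) {c : ℝ}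
    (hev : ∀ (μ : ℝ) (x : H), x ∈ K → x ≠ 0 → T x = (μ:ℂ) • x → c ≤ μ) :
    ∀ y ∈ K, c * ‖y‖^2 ≤ Complex.re ⟪y, T y⟫_ℂ := by
  intro y hy
  set T' : K →ₗ[ℂ] K := T.restrict hK with hT'def
  have hT' : T'.IsSymmetric := by
    intro x z
    have := hT (x : H) (z : H)
    simpa [hT'def, Submodule.coe_inner, LinearMap.restrict_coe_apply] using this
  set n := Module.finrank ℂ K with hn
  let b := hT'.eigenvectorBasis hn.symm
  let μ : Fin n → ℝ := hT'.eigenvalues hn.symm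
  have hb : ∀ i, T' (b i) = (μ i : ℂ) • b i := fun i => hT'.apply_eigenvectorBasis hn.symm i
  have hμ : ∀ i, c ≤ μ i := by
    intro i
    refine hev (μ i) ((b i : H)) (b i).2 ?_ ?_
    · intro h0
      have : ‖b i‖ = 1 := b.orthonormal.1 i
      rw [show ‖b i‖ = ‖(b i : H)‖ from rfl, h0] at this
      simp at this
    · have := congrArg (Subtype.val) (hb i)
      simpa [hT'def, LinearMap.restrict_coe_apply] using this
  set y' : K := ⟨y, hy⟩ with hy'
  have hrepr : ∀ i, b.repr (T' y') i = (μ i : ℂ) * b.repr y' i :=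
    fun i => hT'.eigenvectorBasis_apply_self_apply hn.symm y' i
  have hinner : ⟪y', T' y'⟫_ℂ = ∑ i, (μ i : ℂ) * ((starRingEnd ℂ) (b.repr y' i) * b.repr y' i) := by
    rw [← b.repr.inner_map_map y' (T' y'), PiLp.inner_apply]
    refine Finset.sum_congr rfl fun i _ => ?_
    rw [RCLike.inner_apply, hrepr i]
    ring
  have hself : ⟪y', y'⟫_ℂ = ∑ i, ((starRingEnd ℂ) (b.repr y' i) * b.repr y' i) := by
    rw [← b.repr.inner_map_map y' y', PiLp.inner_apply]
    exact Finset.sum_congr rfl fun i _ => RCLike.inner_apply' _ _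
  have hTy : ⟪y, T y⟫_ℂ = ⟪y', T' y'⟫_ℂ := by
    simp [Submodule.coe_inner, hT'def, LinearMap.restrict_coe_apply, hy']
  have hnorm : ‖y‖^2 = ∑ i, Complex.normSq (b.repr y' i) := by
    have h1 : Complex.re ⟪y', y'⟫_ℂ = ‖y'‖^2 := by
      simpa using inner_self_eq_norm_sq (𝕜 := ℂ) y'
    have h2 : ‖y'‖ = ‖y‖ := rfl
    rw [← h2, ← h1, hself, Complex.re_sum]
    exact Finset.sum_congr rfl fun i _ => by
      rw [← Complex.normSq_eq_conj_mul_self]; simp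
  rw [hTy, hinner, Complex.re_sum, hnorm, Finset.mul_sum]
  refine Finset.sum_le_sum fun i _ => ?_
  rw [← Complex.normSq_eq_conj_mul_self, ← Complex.ofReal_mul]
  simp only [Complex.ofReal_re]
  nlinarith [hμ i, Complex.normSq_nonneg (b.repr y' i)]

end Aux

/-- **Effective Spectral Gap Lemma.** For orthogonal projectors `Π_A`, `Π_B` onto
subspaces `A`, `B`, `U = (2Π_A - I)(2Π_B - I)`, `Θ ∈ (0, π)`, and `Λ_Θ` the projector
onto the eigenspaces of `U` with phase at most `Θ`: for any `ψ_A ∈ A`,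
`‖Λ_Θ (I - Π_B) ψ_A‖ ≤ (Θ/2) ‖ψ_A‖`. -/
theorem effective_spectral_gap {H : Type*} [NormedAddCommGroup H] [InnerProductSpace ℂ H]
    [FiniteDimensional ℂ H]
    (A B : Submodule ℂ H) (Θ : ℝ) (hΘ : Θ ∈ Set.Ioo 0 Real.pi)
    (ψA : H) (hψA : ψA ∈ A) :
    ‖smallPhaseProj (((2:ℂ) • projOnto A - 1) * ((2:ℂ) • projOnto B - 1)) Θ
        ((1 - projOnto B) ψA)‖ ≤ Θ / 2 * ‖ψA‖ := by
  obtain ⟨hΘ0, hΘπ⟩ := hΘ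
  set RA : H →L[ℂ] H := (2:ℂ) • projOnto A - 1 with hRA
  set RB : H →L[ℂ] H := (2:ℂ) • projOnto B - 1 with hRB
  set U : H →L[ℂ] H := RA * RB with hUdef
  set V : H →L[ℂ] H := RB * RA with hVdef
  set K : Submodule ℂ H := Submodule.span ℂ
    {x : H | ∃ φ : ℝ, |φ| ≤ Θ ∧ U x = Complex.exp (φ * Complex.I) • x} with hKdef
  -- adjoint relations
  have hUadj : ∀ x y : H, ⟪U x, y⟫_ℂ = ⟪x, V y⟫_ℂ := by
    intro x y
    simp only [hUdef, hVdef, ContinuousLinearMap.mul_apply]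
    rw [refl_inner, refl_inner]
  have hVadj : ∀ x y : H, ⟪V x, y⟫_ℂ = ⟪x, U y⟫_ℂ := by
    intro x y
    simp only [hUdef, hVdef, ContinuousLinearMap.mul_apply]
    rw [refl_inner, refl_inner]
  have hUV : ∀ x : H, U (V x) = x := by
    intro x
    simp only [hUdef, hVdef, ContinuousLinearMap.mul_apply]
    rw [refl_refl, refl_refl]
  have hVU : ∀ x : H, V (U x) = x := by
    intro x
    simp only [hUdef, hVdef, ContinuousLinearMap.mul_apply]
    rw [refl_refl, refl_refl]
  -- step A : (1 - Π_B) ψA = ½ (ψA - V ψA)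
  have hRAψ : RA ψA = ψA := by
    simp only [hRA, ContinuousLinearMap.sub_apply, ContinuousLinearMap.smul_apply,
      ContinuousLinearMap.one_apply, projOnto_eq_self hψA]
    module
  have stepA : (1 - projOnto B) ψA = (2⁻¹ : ℂ) • (ψA - V ψA) := by
    have hVψ : V ψA = (2:ℂ) • projOnto B ψA - ψA := by
      simp only [hVdef, ContinuousLinearMap.mul_apply, hRAψ, hRB,
        ContinuousLinearMap.sub_apply, ContinuousLinearMap.smul_apply,
        ContinuousLinearMap.one_apply]
    rw [hVψ]
    simp only [ContinuousLinearMap.sub_apply, ContinuousLinearMap.one_apply]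
    module
  -- invariance of K under U and V
  have hUK : ∀ x ∈ K, U x ∈ K := by
    intro x hx
    induction hx using Submodule.span_induction with
    | mem u hu =>
        obtain ⟨φ, hφ, hu'⟩ := hu
        rw [hu']
        exact K.smul_mem _ (Submodule.subset_span ⟨φ, hφ, hu'⟩)
    | zero => simpa using K.zero_mem
    | add a b ha hb iha ihb => rw [map_add]; exact K.add_mem iha ihb
    | smul c a ha iha => rw [map_smul]; exact K.smul_mem c iha
  have hVgen : ∀ (u : H) (φ : ℝ), U u = Complex.exp (φ * Complex.I) • u →
      V u = (Complex.exp (φ * Complex.I))⁻¹ • u := by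
    intro u φ hu'
    rw [eq_inv_smul_iff₀ (Complex.exp_ne_zero _)]
    rw [← map_smul, ← hu', hVU]
  have hVK : ∀ x ∈ K, V x ∈ K := by
    intro x hx
    induction hx using Submodule.span_induction with
    | mem u hu =>
        obtain ⟨φ, hφ, hu'⟩ := hu
        rw [hVgen u φ hu']
        exact K.smul_mem _ (Submodule.subset_span ⟨φ, hφ, hu'⟩)
    | zero => simpa using K.zero_mem
    | add a b ha hb iha ihb => rw [map_add]; exact K.add_mem iha ihb
    | smul c a ha iha => rw [map_smul]; exact K.smul_mem c iha
  -- the symmetric operator W = (U + V)/2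
  set WL : H →ₗ[ℂ] H := (2:ℂ)⁻¹ • ((U : H →ₗ[ℂ] H) + (V : H →ₗ[ℂ] H)) with hWLdef
  have hWLapply : ∀ x : H, WL x = (2:ℂ)⁻¹ • (U x + V x) := by
    intro x
    simp [hWLdef]
  have hWsym : WL.IsSymmetric := by
    intro x y
    simp only [hWLapply, inner_smul_left, inner_smul_right, inner_add_left, inner_add_right,
      hUadj, hVadj]
    rw [show (starRingEnd ℂ) 2⁻¹ = 2⁻¹ by rw [map_inv₀]; norm_num [Complex.conj_ofNat]]
    ring
  have hWK : ∀ x ∈ K, WL x ∈ K := by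
    intro x hx
    rw [hWLapply]
    exact K.smul_mem _ (K.add_mem (hUK x hx) (hVK x hx))
  -- generators are eigenvectors of W with eigenvalue cos φ ≥ cos Θ
  have hWgen : ∀ (u : H) (φ : ℝ), U u = Complex.exp (φ * Complex.I) • u →
      WL u = ((Real.cos φ : ℝ) : ℂ) • u := by
    intro u φ hu'
    rw [hWLapply, hu', hVgen u φ hu', ← Complex.exp_neg, ← add_smul, smul_smul]
    congr 1
    have h2c := Complex.two_cos (x := (φ : ℂ))
    rw [neg_mul] at h2c
    rw [Complex.ofReal_cos]
    linear_combination -h2c / 2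
  -- eigenvalue lower bound on K
  have hev : ∀ (μ : ℝ) (x : H), x ∈ K → x ≠ 0 → WL x = (μ:ℂ) • x → Real.cos Θ ≤ μ := by
    intro μ x hx hx0 hμx
    by_contra hlt
    push_neg at hlt
    have hxu : ∀ v ∈ K, ⟪x, v⟫_ℂ = 0 := by
      intro v hv
      induction hv using Submodule.span_induction with
      | mem u hu =>
          obtain ⟨φ, hφ, hu'⟩ := hu
          have hcoseq : (μ : ℂ) * ⟪x, u⟫_ℂ = ((Real.cos φ : ℝ) : ℂ) * ⟪x, u⟫_ℂ := by
            have h1 : ⟪WL x, u⟫_ℂ = ⟪x, WL u⟫_ℂ := hWsym x u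
            rw [hμx, hWgen u φ hu', inner_smul_left, inner_smul_right,
              Complex.conj_ofReal] at h1
            exact h1
          have hcosle : Real.cos Θ ≤ Real.cos φ := by
            rw [← Real.cos_abs φ]
            exact Real.cos_le_cos_of_nonneg_of_le_pi (abs_nonneg φ) hΘπ.le hφ
          have hne : (μ : ℂ) ≠ ((Real.cos φ : ℝ) : ℂ) := by
            intro h
            exact absurd (Complex.ofReal_injective h) (by linarith)
          have := sub_eq_zero.2 hcoseq
          rw [← sub_mul] at this
          rcases mul_eq_zero.1 this with h | h
          · exact absurd (sub_eq_zero.1 h) hne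
          · exact h
      | zero => simp
      | add a b ha hb iha ihb => rw [inner_add_right, iha, ihb, add_zero]
      | smul c a ha iha => rw [inner_smul_right, iha, mul_zero]
    exact hx0 (inner_self_eq_zero.1 (hxu x hx))
  have hq := quadform_ge hWsym hWK hev
  -- Kᗮ is V-invariant, so projOnto K commutes with V
  have hVKp : ∀ x ∈ Kᗮ, V x ∈ Kᗮ := by
    intro x hx
    rw [Submodule.mem_orthogonal] at hx ⊢
    intro u hu
    rw [← hUadj u x]
    exact hx (U u) (hUK u hu)
  have hcomm : ∀ x : H, projOnto K (V x) = V (projOnto K x) := by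
    intro x
    have hdecomp : V x = V (projOnto K x) + V (x - projOnto K x) := by
      rw [← map_add]
      congr 1
      module
    have hmemp : x - projOnto K x ∈ Kᗮ := K.sub_starProjection_mem_orthogonal x
    have hz : projOnto K (V (x - projOnto K x)) = 0 := by
      have hm := hVKp _ hmemp
      have h0 : K.orthogonalProjection (V (x - projOnto K x)) = 0 :=
        Submodule.orthogonalProjectionOnto_apply_of_mem_orthogonal hm
      show (↑(K.orthogonalProjection (V (x - projOnto K x))) : H) = 0
      rw [h0, Submodule.coe_zero]
    rw [hdecomp, map_add, projOnto_eq_self (hVK _ (projOnto_mem K x)), hz, add_zero]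
  -- the final computation
  set y : H := projOnto K ψA with hydef
  have hyK : y ∈ K := projOnto_mem K ψA
  have hgoal : smallPhaseProj U Θ ((1 - projOnto B) ψA) = (2⁻¹ : ℂ) • (y - V y) := by
    show projOnto K ((1 - projOnto B) ψA) = (2⁻¹ : ℂ) • (y - V y)
    rw [stepA, map_smul, map_sub, hcomm, hydef]
  have hVynorm : ‖V y‖ = ‖y‖ := by
    have h1 : ⟪V y, V y⟫_ℂ = ⟪y, y⟫_ℂ := by rw [hVadj, hUV]
    have h2 := congrArg Complex.re h1
    rw [show Complex.re ⟪V y, V y⟫_ℂ = ‖V y‖^2 by simpa using inner_self_eq_norm_sq (𝕜 := ℂ) (V y),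
      show Complex.re ⟪y, y⟫_ℂ = ‖y‖^2 by simpa using inner_self_eq_norm_sq (𝕜 := ℂ) y] at h2
    rw [← Real.sqrt_sq (norm_nonneg (V y)), h2, Real.sqrt_sq (norm_nonneg y)]
  have hrepart : Complex.re ⟪y, V y⟫_ℂ = Complex.re ⟪y, WL y⟫_ℂ := by
    have h1 : ⟪y, U y⟫_ℂ = (starRingEnd ℂ) ⟪y, V y⟫_ℂ := by
      rw [inner_conj_symm, hVadj]
    rw [hWLapply, inner_smul_right, inner_add_right, h1]
    have key : ∀ z : ℂ, (2⁻¹ * ((starRingEnd ℂ) z + z)).re = z.re := by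
      intro z
      rw [add_comm, Complex.add_conj]
      have h4 : (2⁻¹ : ℂ) * ((2 * z.re : ℝ) : ℂ) = ((z.re : ℝ) : ℂ) := by push_cast; ring
      rw [h4, Complex.ofReal_re]
    exact (key _).symm
  have hbound : ‖y - V y‖^2 ≤ Θ^2 * ‖y‖^2 := by
    have hns := @norm_sub_sq ℂ _ _ _ _ y (V y)
    rw [hVynorm] at hns
    have hns' : ‖y - V y‖^2 = ‖y‖^2 - 2 * Complex.re ⟪y, V y⟫_ℂ + ‖y‖^2 := by
      simpa using hns
    have hq' := hq y hyK
    rw [← hrepart] at hq'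
    have hcos := Real.one_sub_sq_div_two_lt_cos (x := Θ) (ne_of_gt hΘ0)
    have h3 : (1 - Θ^2/2) * ‖y‖^2 ≤ Real.cos Θ * ‖y‖^2 :=
      mul_le_mul_of_nonneg_right hcos.le (sq_nonneg _)
    nlinarith
  have hfin : ‖y - V y‖ ≤ Θ * ‖y‖ := by
    nlinarith [norm_nonneg (y - V y), mul_nonneg hΘ0.le (norm_nonneg y)]
  have hyn : ‖y‖ ≤ ‖ψA‖ := projOnto_norm_le K ψA
  rw [hgoal, norm_smul]
  have h2n : ‖(2⁻¹ : ℂ)‖ = 2⁻¹ := by norm_num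
  rw [h2n]
  nlinarith [norm_nonneg (y - V y), norm_nonneg y, hΘ0.le]
end

section
/- Let Π_A, Π_B be orthogonal projectors on a finite-dimensional complex inner product space H, U = (2Π_A - I)(2Π_B - I), δ ≥ 0, Θ ∈ (0, π), and Λ_Θ the orthogonal projector onto eigenspaces of U with phase at most Θ. If ψ ∈ H satisfies ‖Π_A ψ‖² ≤ δ‖ψ‖² and ‖Π_B ψ‖² ≤ δ‖ψ‖², then ‖(I - Λ_Θ) ψ‖² ≤ 4π²δ‖ψ‖²/Θ². -/
section Aux

variable {H : Type*} [NormedAddCommGroup H] [InnerProductSpace ℂ H] [FiniteDimensional ℂ H]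

local notation "⟪" x ", " y "⟫" => @inner ℂ _ _ x y

lemma projOnto_proj (K : Submodule ℂ H) (x : H) : projOnto K (projOnto K x) = projOnto K x := by
  exact congrArg (fun f : H →L[ℂ] H => f x) K.isIdempotentElem_starProjection

lemma projOnto_sa (K : Submodule ℂ H) : IsSelfAdjoint (projOnto K) :=
  isSelfAdjoint_starProjection K

lemma reflect_sa (K : Submodule ℂ H) : IsSelfAdjoint ((2:ℂ) • projOnto K - 1) := by
  rw [two_smul]
  exact ((projOnto_sa K).add (projOnto_sa K)).sub (IsSelfAdjoint.one _)

lemma reflect_mul_self (K : Submodule ℂ H) :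
    ((2:ℂ) • projOnto K - 1) * ((2:ℂ) • projOnto K - 1) = 1 := by
  ext x
  have h := projOnto_proj K x
  simp only [ContinuousLinearMap.mul_apply, ContinuousLinearMap.sub_apply,
    ContinuousLinearMap.smul_apply, ContinuousLinearMap.one_apply, map_sub, map_smul, h]
  module

lemma W_op (U : H →L[ℂ] H) (hU1 : star U * U = 1) :
    star (U - 1) * (U - 1) = 1 + 1 - star U - U := by
  have h : star (U - 1) = star U - 1 := by simp
  rw [h]
  calc (star U - 1) * (U - 1) = star U * U - star U - U + 1 := by noncomm_ring
    _ = 1 + 1 - star U - U := by rw [hU1]; abel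

lemma eig_small (U : H →L[ℂ] H) (hU1 : star U * U = 1) (hU2 : U * star U = 1)
    {Θ : ℝ} (hΘ0 : 0 < Θ) (hΘπ : Θ < Real.pi) {μ : ℝ} (hμ : μ < 2 - 2 * Real.cos Θ)
    {e : H} (he : (star (U - 1) * (U - 1)) e = (μ : ℂ) • e) :
    e ∈ Submodule.span ℂ
      {x : H | ∃ φ : ℝ, |φ| ≤ Θ ∧ U x = Complex.exp (φ * Complex.I) • x} := by
  have hsum : U e + (star U) e = (2 - (μ:ℂ)) • e := by
    have h0 := he
    rw [W_op U hU1] at h0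
    simp only [ContinuousLinearMap.sub_apply, ContinuousLinearMap.add_apply,
      ContinuousLinearMap.one_apply] at h0
    have : U e + (star U) e = e + e - (μ:ℂ) • e := by
      rw [← h0]; abel
    rw [this]; module
  rcases le_or_gt μ 0 with hμ0 | hμ0
  · -- small case: U e = e
    have h1 : ⟪e, (star (U - 1) * (U - 1)) e⟫ = ⟪(U - 1) e, (U - 1) e⟫ := by
      rw [ContinuousLinearMap.mul_apply, ContinuousLinearMap.star_eq_adjoint,
        ContinuousLinearMap.adjoint_inner_right]
    have h2 : ‖(U - 1) e‖ ^ 2 = μ * ‖e‖ ^ 2 := by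
      rw [← inner_self_eq_norm_sq (𝕜 := ℂ), ← h1, he, inner_smul_right,
        inner_self_eq_norm_sq_to_K]
      norm_num [← Complex.ofReal_pow, ← Complex.ofReal_mul]
    have h3 : (U - 1) e = 0 := by
      have : ‖(U - 1) e‖ ^ 2 ≤ 0 := h2 ▸ mul_nonpos_of_nonpos_of_nonneg hμ0 (by positivity)
      have := le_antisymm this (by positivity)
      simpa [pow_eq_zero_iff] using this
    have hUe : U e = e := by
      have := h3
      simp only [ContinuousLinearMap.sub_apply, ContinuousLinearMap.one_apply,
        sub_eq_zero] at this
      exact this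
    exact Submodule.subset_span ⟨0, by simpa using hΘ0.le, by simpa using hUe⟩
  · -- generic case
    set φ := Real.arccos (1 - μ / 2) with hφdef
    have hcosΘ : -1 < Real.cos Θ := by
      have := Real.cos_lt_cos_of_nonneg_of_le_pi hΘ0.le le_rfl hΘπ
      simpa [Real.cos_pi] using this
    have hb1 : -1 ≤ 1 - μ / 2 := by linarith
    have hb2 : 1 - μ / 2 ≤ 1 := by linarith
    have hcos : Real.cos φ = 1 - μ / 2 := Real.cos_arccos hb1 hb2
    have hφ0 : 0 ≤ φ := Real.arccos_nonneg _
    have hφΘ : φ ≤ Θ := by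
      by_contra hc
      push_neg at hc
      have := Real.cos_lt_cos_of_nonneg_of_le_pi hΘ0.le (Real.arccos_le_pi _) hc
      rw [hcos] at this
      linarith
    have hsinφ : 0 < Real.sin φ := by
      rw [hφdef, Real.sin_arccos]
      have : (0:ℝ) < 1 - (1 - μ / 2) ^ 2 := by nlinarith
      positivity
    set a : ℂ := Complex.exp (↑φ * Complex.I) with hadef
    set b : ℂ := Complex.exp (-↑φ * Complex.I) with hbdef
    have hab : a * b = 1 := by
      rw [hadef, hbdef, ← Complex.exp_add]
      norm_num
    have haddb : a + b = 2 - (μ:ℂ) := by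
      rw [hadef, hbdef, Complex.exp_mul_I, Complex.exp_mul_I, Complex.cos_neg, Complex.sin_neg,
        ← Complex.ofReal_cos, hcos]
      push_cast
      ring
    have habne : a - b ≠ 0 := by
      have h : a - b = (2 * Real.sin φ : ℝ) * Complex.I := by
        rw [hadef, hbdef, Complex.exp_mul_I, Complex.exp_mul_I, Complex.cos_neg, Complex.sin_neg,
          ← Complex.ofReal_sin]
        push_cast
        ring
      rw [h]
      exact mul_ne_zero (by exact_mod_cast (by positivity : (2 * Real.sin φ : ℝ) ≠ 0))
        Complex.I_ne_zero
    have hUst : U ((star U) e) = e := by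
      rw [← ContinuousLinearMap.mul_apply, hU2, ContinuousLinearMap.one_apply]
    have hUU : U (U e) = (2 - (μ:ℂ)) • U e - e := by
      have := congrArg U hsum
      rw [map_add, map_smul, hUst] at this
      rw [eq_sub_iff_add_eq, this]
    set y := U e - b • e with hydef
    set z := U e - a • e with hzdef
    have hy : U y = a • y := by
      rw [hydef, map_sub, map_smul, hUU, smul_sub, smul_smul, hab, ← haddb]
      module
    have hz : U z = b • z := by
      rw [hzdef, map_sub, map_smul, hUU, smul_sub, smul_smul, mul_comm b a, hab, ← haddb]
      module
    have hyz : y - z = (a - b) • e := by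
      rw [hydef, hzdef, sub_smul]
      abel
    have he_eq : e = (a - b)⁻¹ • (y - z) := by
      rw [hyz, smul_smul, inv_mul_cancel₀ habne, one_smul]
    rw [he_eq]
    refine Submodule.smul_mem _ _ (Submodule.sub_mem _ ?_ ?_)
    · exact Submodule.subset_span ⟨φ, by rwa [abs_of_nonneg hφ0], hy⟩
    · refine Submodule.subset_span ⟨-φ, by rwa [abs_neg, abs_of_nonneg hφ0], ?_⟩
      rw [hz, hbdef]
      push_cast
      ring_nf

lemma key (U : H →L[ℂ] H) (hU1 : star U * U = 1) (hU2 : U * star U = 1)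
    {Θ : ℝ} (hΘ0 : 0 < Θ) (hΘπ : Θ < Real.pi) {w : H}
    (hw : w ∈ (Submodule.span ℂ
      {x : H | ∃ φ : ℝ, |φ| ≤ Θ ∧ U x = Complex.exp (φ * Complex.I) • x})ᗮ) :
    (2 - 2 * Real.cos Θ) * ‖w‖ ^ 2 ≤ ‖(U - 1) w‖ ^ 2 := by
  set W := star (U - 1) * (U - 1) with hWdef
  have hWsa : IsSelfAdjoint W := IsSelfAdjoint.star_mul_self (U - 1)
  have hWsym : (W : H →ₗ[ℂ] H).IsSymmetric :=
    ContinuousLinearMap.isSelfAdjoint_iff_isSymmetric.mp hWsa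
  have hn : Module.finrank ℂ H = Module.finrank ℂ H := rfl
  set b := hWsym.eigenvectorBasis hn with hbdef
  set μ := hWsym.eigenvalues hn with hμdef
  have hWb : ∀ i, W (b i) = (μ i : ℂ) • b i := fun i => hWsym.apply_eigenvectorBasis hn i
  set c : Fin (Module.finrank ℂ H) → ℂ := fun i => ⟪w, b i⟫ with hcdef
  have h_norm : ‖w‖ ^ 2 = ∑ i, ‖c i‖ ^ 2 := by
    have h := b.sum_inner_mul_inner w w
    have h2 : ∀ i, ⟪w, b i⟫ * ⟪b i, w⟫ = ((‖c i‖ ^ 2 : ℝ) : ℂ) := by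
      intro i
      rw [← inner_conj_symm (b i) w, Complex.mul_conj']
      norm_cast
    rw [Finset.sum_congr rfl (fun i _ => h2 i)] at h
    have h3 : ⟪w, w⟫ = ((‖w‖ ^ 2 : ℝ) : ℂ) := by
      rw [inner_self_eq_norm_sq_to_K]; norm_cast
    rw [h3] at h
    exact_mod_cast h.symm
  have h_q : ‖(U - 1) w‖ ^ 2 = ∑ i, μ i * ‖c i‖ ^ 2 := by
    have hQ : ⟪w, W w⟫ = ⟪(U - 1) w, (U - 1) w⟫ := by
      rw [hWdef, ContinuousLinearMap.mul_apply, ContinuousLinearMap.star_eq_adjoint,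
        ContinuousLinearMap.adjoint_inner_right]
    have h := b.sum_inner_mul_inner w (W w)
    have h2 : ∀ i, ⟪w, b i⟫ * ⟪b i, W w⟫ = ((μ i * ‖c i‖ ^ 2 : ℝ) : ℂ) := by
      intro i
      have ha : ⟪b i, W w⟫ = ⟪W (b i), w⟫ := by
        rw [← ContinuousLinearMap.adjoint_inner_left, ← ContinuousLinearMap.star_eq_adjoint,
          hWsa.star_eq]
      rw [ha, hWb i, inner_smul_left, Complex.conj_ofReal, ← inner_conj_symm (b i) w]
      calc c i * ((μ i : ℂ) * (starRingEnd ℂ) (c i))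
          = (μ i : ℂ) * (c i * (starRingEnd ℂ) (c i)) := by ring
        _ = (μ i : ℂ) * ((‖c i‖ : ℂ) ^ 2) := by rw [Complex.mul_conj']
        _ = ((μ i * ‖c i‖ ^ 2 : ℝ) : ℂ) := by norm_cast
    rw [Finset.sum_congr rfl (fun i _ => h2 i), hQ] at h
    have h3 : ⟪(U - 1) w, (U - 1) w⟫ = ((‖(U - 1) w‖ ^ 2 : ℝ) : ℂ) := by
      rw [inner_self_eq_norm_sq_to_K]; norm_cast
    rw [h3] at h
    exact_mod_cast h.symm
  rw [h_norm, h_q, Finset.mul_sum]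
  refine Finset.sum_le_sum fun i _ => ?_
  by_cases hlt : μ i < 2 - 2 * Real.cos Θ
  · have hmem := eig_small U hU1 hU2 hΘ0 hΘπ hlt (hWb i)
    have hci : c i = 0 := by
      have h0 : ⟪b i, w⟫ = 0 := (Submodule.mem_orthogonal _ w).mp hw (b i) hmem
      show ⟪w, b i⟫ = 0
      rw [← inner_conj_symm w (b i), h0, map_zero]
    simp [hci]
  · exact mul_le_mul_of_nonneg_right (not_lt.mp hlt) (by positivity)

lemma W_mapsTo (U : H →L[ℂ] H) (hU1 : star U * U = 1) (Θ : ℝ) {s : H}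
    (hs : s ∈ Submodule.span ℂ
      {x : H | ∃ φ : ℝ, |φ| ≤ Θ ∧ U x = Complex.exp (φ * Complex.I) • x}) :
    (star (U - 1) * (U - 1)) s ∈ Submodule.span ℂ
      {x : H | ∃ φ : ℝ, |φ| ≤ Θ ∧ U x = Complex.exp (φ * Complex.I) • x} := by
  set S := Submodule.span ℂ
      {x : H | ∃ φ : ℝ, |φ| ≤ Θ ∧ U x = Complex.exp (φ * Complex.I) • x} with hSdef
  set W := star (U - 1) * (U - 1) with hWdef
  refine Submodule.span_induction ?_ ?_ ?_ ?_ hs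
  · rintro x ⟨φ, hφ, hUx⟩
    set a : ℂ := Complex.exp (φ * Complex.I) with hadef
    have hane : a ≠ 0 := Complex.exp_ne_zero _
    have hstx : (star U) x = a⁻¹ • x := by
      have h1 : (star U) (U x) = x := by
        rw [← ContinuousLinearMap.mul_apply, hU1, ContinuousLinearMap.one_apply]
      rw [hUx, map_smul] at h1
      calc (star U) x = a⁻¹ • (a • (star U) x) := by
            rw [smul_smul, inv_mul_cancel₀ hane, one_smul]
        _ = a⁻¹ • x := by rw [h1]
    have hWx : W x = x + x - a⁻¹ • x - a • x := by
      rw [hWdef, W_op U hU1]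
      simp only [ContinuousLinearMap.sub_apply, ContinuousLinearMap.add_apply,
        ContinuousLinearMap.one_apply, hstx, hUx]
    rw [hWx]
    have hxS : x ∈ S := Submodule.subset_span ⟨φ, hφ, hUx⟩
    exact Submodule.sub_mem _ (Submodule.sub_mem _ (Submodule.add_mem _ hxS hxS)
      (Submodule.smul_mem _ _ hxS)) (Submodule.smul_mem _ _ hxS)
  · simp
  · intro x y _ _ hx hy
    rw [map_add]; exact Submodule.add_mem _ hx hy
  · intro c x _ hx
    rw [map_smul]; exact Submodule.smul_mem _ _ hx

lemma reflect_norm_sq (K : Submodule ℂ H) (x : H) :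
    ‖((2:ℂ) • projOnto K - 1) x‖ ^ 2 = ‖x‖ ^ 2 := by
  set R := (2:ℂ) • projOnto K - 1 with hRdef
  have hsym : (R : H →ₗ[ℂ] H).IsSymmetric :=
    ContinuousLinearMap.isSelfAdjoint_iff_isSymmetric.mp (reflect_sa K)
  have h1 : ⟪R x, R x⟫ = ⟪x, x⟫ := by
    have h2 := hsym x (R x)
    have h3 : R (R x) = x := by
      rw [← ContinuousLinearMap.mul_apply, reflect_mul_self K, ContinuousLinearMap.one_apply]
    calc ⟪R x, R x⟫ = ⟪x, R (R x)⟫ := h2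
      _ = ⟪x, x⟫ := by rw [h3]
  rw [← inner_self_eq_norm_sq (𝕜 := ℂ), h1, inner_self_eq_norm_sq]

end Aux

/-- **Effectively Zero Lemma.** If `‖Π_A ψ‖² ≤ δ‖ψ‖²` and `‖Π_B ψ‖² ≤ δ‖ψ‖²`, then
`‖(I - Λ_Θ) ψ‖² ≤ 4π²δ‖ψ‖²/Θ²`. -/
theorem effectively_zero {H : Type*} [NormedAddCommGroup H] [InnerProductSpace ℂ H]
    [FiniteDimensional ℂ H]
    (A B : Submodule ℂ H) (δ : ℝ) (hδ : 0 ≤ δ) (Θ : ℝ) (hΘ : Θ ∈ Set.Ioo 0 Real.pi)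
    (ψ : H)
    (hA : ‖projOnto A ψ‖ ^ 2 ≤ δ * ‖ψ‖ ^ 2)
    (hB : ‖projOnto B ψ‖ ^ 2 ≤ δ * ‖ψ‖ ^ 2) :
    ‖((1 - smallPhaseProj (((2:ℂ) • projOnto A - 1) * ((2:ℂ) • projOnto B - 1)) Θ :
        H →L[ℂ] H)) ψ‖ ^ 2
      ≤ 4 * Real.pi ^ 2 * δ * ‖ψ‖ ^ 2 / Θ ^ 2 := by
  obtain ⟨hΘ0, hΘπ⟩ := hΘ
  set RA := (2:ℂ) • projOnto A - 1 with hRAdef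
  set RB := (2:ℂ) • projOnto B - 1 with hRBdef
  set U := RA * RB with hUdef
  have hstar : star U = RB * RA := by
    rw [hUdef, star_mul, (reflect_sa A).star_eq, (reflect_sa B).star_eq]
  have hU1 : star U * U = 1 := by
    rw [hstar, hUdef, mul_assoc, ← mul_assoc RA RA RB, reflect_mul_self, one_mul,
      reflect_mul_self]
  have hU2 : U * star U = 1 := by
    rw [hstar, hUdef, mul_assoc, ← mul_assoc RB RB RA, reflect_mul_self, one_mul,
      reflect_mul_self]
  set S := Submodule.span ℂ
      {x : H | ∃ φ : ℝ, |φ| ≤ Θ ∧ U x = Complex.exp (φ * Complex.I) • x} with hSdef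
  set s : H := projOnto S ψ with hsdef
  set w : H := ψ - s with hwdef
  have hLHS : (1 - smallPhaseProj U Θ : H →L[ℂ] H) ψ = w := by
    simp only [ContinuousLinearMap.sub_apply, ContinuousLinearMap.one_apply]
    rfl
  rw [hLHS]
  have hworth : w ∈ Sᗮ := S.sub_starProjection_mem_orthogonal ψ
  have hsS : s ∈ S := by
    rw [hsdef]
    exact SetLike.coe_mem (S.orthogonalProjection ψ)
  -- step 1: the spectral bound
  have h1 : (2 - 2 * Real.cos Θ) * ‖w‖ ^ 2 ≤ ‖(U - 1) w‖ ^ 2 :=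
    key U hU1 hU2 hΘ0 hΘπ hworth
  -- step 2: ‖(U-1) w‖² ≤ ‖(U-1) ψ‖²
  have h2 : ‖(U - 1) w‖ ^ 2 ≤ ‖(U - 1) ψ‖ ^ 2 := by
    have hψ : ψ = s + w := by rw [hwdef]; abel
    have hcross : @inner ℂ _ _ ((U - 1) s) ((U - 1) w) = 0 := by
      have ha : @inner ℂ _ _ ((U - 1) s) ((U - 1) w)
          = @inner ℂ _ _ ((star (U - 1) * (U - 1)) s) w := by
        rw [ContinuousLinearMap.mul_apply, ContinuousLinearMap.star_eq_adjoint,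
          ContinuousLinearMap.adjoint_inner_left]
      rw [ha]
      exact (Submodule.mem_orthogonal S w).mp hworth _ (W_mapsTo U hU1 Θ hsS)
    have hexp : ‖(U - 1) ψ‖ ^ 2 = ‖(U - 1) s‖ ^ 2 + ‖(U - 1) w‖ ^ 2 := by
      calc ‖(U - 1) ψ‖ ^ 2 = ‖(U - 1) s + (U - 1) w‖ ^ 2 := by rw [hψ, map_add]
        _ = ‖(U - 1) s‖ ^ 2 + 2 * RCLike.re (@inner ℂ _ _ ((U - 1) s) ((U - 1) w))
            + ‖(U - 1) w‖ ^ 2 := norm_add_sq _ _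
        _ = ‖(U - 1) s‖ ^ 2 + ‖(U - 1) w‖ ^ 2 := by rw [hcross]; simp
    nlinarith [sq_nonneg ‖(U - 1) s‖]
  -- step 3: ‖(U-1) ψ‖² ≤ 16 δ ‖ψ‖²
  have h3 : ‖(U - 1) ψ‖ ^ 2 ≤ 16 * δ * ‖ψ‖ ^ 2 := by
    have hfact : U - 1 = RA * (RB - RA) := by
      rw [mul_sub, hUdef, reflect_mul_self]
    have hnorm1 : ‖(U - 1) ψ‖ ^ 2 = ‖(RB - RA) ψ‖ ^ 2 := by
      rw [hfact, ContinuousLinearMap.mul_apply, hRAdef, reflect_norm_sq]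
    have hpt : (RB - RA) ψ = (2:ℂ) • projOnto B ψ - (2:ℂ) • projOnto A ψ := by
      simp only [hRAdef, hRBdef, ContinuousLinearMap.sub_apply,
        ContinuousLinearMap.smul_apply, ContinuousLinearMap.one_apply]
      abel
    have hnorm2 : ‖(RB - RA) ψ‖ ≤ 2 * ‖projOnto B ψ‖ + 2 * ‖projOnto A ψ‖ := by
      rw [hpt]
      calc ‖(2:ℂ) • projOnto B ψ - (2:ℂ) • projOnto A ψ‖
          ≤ ‖(2:ℂ) • projOnto B ψ‖ + ‖(2:ℂ) • projOnto A ψ‖ := norm_sub_le _ _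
        _ = 2 * ‖projOnto B ψ‖ + 2 * ‖projOnto A ψ‖ := by
            rw [norm_smul, norm_smul]; norm_num
    rw [hnorm1]
    have hnn : (0:ℝ) ≤ ‖(RB - RA) ψ‖ := norm_nonneg _
    nlinarith [hA, hB, norm_nonneg (projOnto A ψ), norm_nonneg (projOnto B ψ),
      sq_nonneg (‖projOnto A ψ‖ - ‖projOnto B ψ‖)]
  -- Jordan bound: 4 Θ² ≤ (2 - 2 cos Θ) π²
  have hπ : (0:ℝ) < Real.pi := Real.pi_pos
  have hπ2 : (0:ℝ) < Real.pi ^ 2 := by positivity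
  have hJ0 := Real.cos_le_one_sub_mul_cos_sq (x := Θ) (by rw [abs_of_nonneg hΘ0.le]; exact hΘπ.le)
  have hcosb : Real.pi ^ 2 * Real.cos Θ ≤ Real.pi ^ 2 - 2 * Θ ^ 2 := by
    have h' := mul_le_mul_of_nonneg_left hJ0 hπ2.le
    have heq : Real.pi ^ 2 * (1 - 2 / Real.pi ^ 2 * Θ ^ 2) = Real.pi ^ 2 - 2 * Θ ^ 2 := by
      field_simp
    linarith
  have hJ : 4 * Θ ^ 2 ≤ (2 - 2 * Real.cos Θ) * Real.pi ^ 2 := by nlinarith [hcosb]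
  -- combine
  have hchain : 4 * Θ ^ 2 * ‖w‖ ^ 2 ≤ Real.pi ^ 2 * (16 * δ * ‖ψ‖ ^ 2) := by
    calc 4 * Θ ^ 2 * ‖w‖ ^ 2 ≤ (2 - 2 * Real.cos Θ) * Real.pi ^ 2 * ‖w‖ ^ 2 :=
          mul_le_mul_of_nonneg_right hJ (by positivity)
      _ = Real.pi ^ 2 * ((2 - 2 * Real.cos Θ) * ‖w‖ ^ 2) := by ring
      _ ≤ Real.pi ^ 2 * (16 * δ * ‖ψ‖ ^ 2) := by
          refine mul_le_mul_of_nonneg_left ?_ hπ2.le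
          exact (h1.trans h2).trans h3
  rw [le_div_iff₀ (by positivity : (0:ℝ) < Θ ^ 2)]
  nlinarith [hchain]
end

section
/- Let Z be a hypergeometric random variable with parameters (N, K, d) (number of marked objects when drawing d objects without replacement from N objects of which K are marked), and let μ = Kd/N. Then for every real c > 0, Pr[Z ≥ c] ≤ 2 e^c (c/μ)^{−c}. -/
open scoped Classical

/-!
Pairing the falling factorials in `Pr[Z = k] = C(d,k) K^(k) (N-K)^(d-k) / N^(d)` factor by factor
gives `Pr[Z = k] ≤ C(d,k) (K/N)^k ≤ μ^k / k!`, so `Z` is dominated termwise by a Poisson weight.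
For `μ ≤ c` and `k ≥ c` one has `μ^k ≤ (μ/c)^c c^k`, and summing `c^k / k!` gives at most `e^c`.
For `μ > c` the right-hand side is at least `1`.
-/

open Finset Real
open scoped Nat

namespace Nat

theorem pow_mul_descFactorial_le {K N : ℕ} (hKN : K ≤ N) (k : ℕ) :
    N ^ k * K.descFactorial k ≤ K ^ k * N.descFactorial k := by
  induction k with
  | zero => simp
  | succ k ih =>
    have step : N * (K - k) ≤ K * (N - k) := by
      rw [Nat.mul_sub, Nat.mul_sub, Nat.mul_comm N K]
      exact Nat.sub_le_sub_left (Nat.mul_le_mul_right k hKN) _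
    calc N ^ (k + 1) * K.descFactorial (k + 1)
        = N * (K - k) * (N ^ k * K.descFactorial k) := by rw [descFactorial_succ]; ring
      _ ≤ K * (N - k) * (K ^ k * N.descFactorial k) := Nat.mul_le_mul step ih
      _ = K ^ (k + 1) * N.descFactorial (k + 1) := by rw [descFactorial_succ]; ring

/-- The hypergeometric weight is at most the binomial one: `Pr[Z = k] ≤ C(d,k) (K/N)^k`. -/
theorem pow_mul_choose_mul_choose_le {N K d k : ℕ} (hK : K ≤ N) (hkd : k ≤ d) :
    N ^ k * (K.choose k * (N - K).choose (d - k)) ≤ K ^ k * (d.choose k * N.choose d) := by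
  rcases lt_or_ge K k with hKk | hkK
  · simp [choose_eq_zero_of_lt hKk]
  have falling : N ^ k * K.descFactorial k * (N - K).descFactorial (d - k)
      ≤ K ^ k * N.descFactorial d :=
    calc N ^ k * K.descFactorial k * (N - K).descFactorial (d - k)
        ≤ K ^ k * N.descFactorial k * (N - k).descFactorial (d - k) :=
          Nat.mul_le_mul (pow_mul_descFactorial_le hK k) (descFactorial_le _ (by omega))
      _ = K ^ k * N.descFactorial d := by
          rw [← descFactorial_mul_descFactorial hkd]; ring
  have hfact : d ! = k ! * (d - k)! * d.choose k := by
    rw [← choose_mul_factorial_mul_factorial hkd]; ring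
  simp only [descFactorial_eq_factorial_mul_choose, hfact] at falling
  refine Nat.le_of_mul_le_mul_left ?_ (Nat.mul_pos k.factorial_pos (d - k).factorial_pos)
  calc k ! * (d - k)! * (N ^ k * (K.choose k * (N - K).choose (d - k)))
      = N ^ k * (k ! * K.choose k) * ((d - k)! * (N - K).choose (d - k)) := by ring
    _ ≤ K ^ k * (k ! * (d - k)! * d.choose k * N.choose d) := falling
    _ = k ! * (d - k)! * (K ^ k * (d.choose k * N.choose d)) := by ring

end Nat

/-- `Pr[Z = k]` for `Z` hypergeometric with parameters `(N, K, d)`. -/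
noncomputable def hypergeomProb (N K d k : ℕ) : ℝ :=
  ((K.choose k * (N - K).choose (d - k) : ℕ) : ℝ) / ((N.choose d : ℕ) : ℝ)

theorem hypergeomProb_nonneg (N K d k : ℕ) : 0 ≤ hypergeomProb N K d k := by
  unfold hypergeomProb; positivity

theorem sum_hypergeomProb_le_one {N K : ℕ} (hK : K ≤ N) (d : ℕ) :
    ∑ k ∈ range (d + 1), hypergeomProb N K d k ≤ 1 := by
  have vandermonde : ∑ k ∈ range (d + 1), K.choose k * (N - K).choose (d - k) = N.choose d := by
    rw [← Nat.sum_antidiagonal_eq_sum_range_succ (fun i j => K.choose i * (N - K).choose j),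
      ← Nat.add_choose_eq, Nat.add_sub_cancel' hK]
  simp only [hypergeomProb, ← sum_div]
  rw [← Nat.cast_sum, vandermonde]
  exact div_self_le_one _

theorem hypergeomProb_le_pow_div_factorial {N K d k : ℕ} (hN : 0 < N) (hK : K ≤ N)
    (hkd : k ≤ d) : hypergeomProb N K d k ≤ ((K : ℝ) * d / N) ^ k / k ! := by
  have hN' : (N : ℝ) ≠ 0 := by positivity
  have hNk : (0 : ℝ) < (N : ℝ) ^ k := by positivity
  have binom : (N : ℝ) ^ k * ((K.choose k * (N - K).choose (d - k) : ℕ) : ℝ)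
      ≤ (K : ℝ) ^ k * ((d.choose k : ℝ) * (N.choose d : ℝ)) := by
    exact_mod_cast Nat.pow_mul_choose_mul_choose_le hK hkd
  have hchoose : (d.choose k : ℝ) ≤ (d : ℝ) ^ k / k ! := Nat.choose_le_pow_div k d
  refine div_le_of_le_mul₀ (by positivity) (by positivity) ?_
  rw [← mul_le_mul_iff_of_pos_left hNk]
  calc (N : ℝ) ^ k * ((K.choose k * (N - K).choose (d - k) : ℕ) : ℝ)
      ≤ (K : ℝ) ^ k * ((d : ℝ) ^ k / k ! * (N.choose d : ℝ)) := by
        refine binom.trans ?_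
        gcongr
    _ = (N : ℝ) ^ k * (((K : ℝ) * d / N) ^ k / k ! * ((N.choose d : ℕ) : ℝ)) := by
        rw [div_pow, mul_pow]
        field_simp

theorem pow_le_rpow_div_mul_pow {μ c : ℝ} (hμ : 0 ≤ μ) (hμc : μ ≤ c) (hc : 0 < c) {k : ℕ}
    (hck : c ≤ k) : μ ^ k ≤ (μ / c) ^ c * c ^ k := by
  calc μ ^ k = (μ / c) ^ (k : ℝ) * c ^ k := by
        rw [rpow_natCast, ← mul_pow, div_mul_cancel₀ _ hc.ne']
    _ ≤ (μ / c) ^ c * c ^ k := by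
        gcongr ?_ * _
        exact rpow_le_rpow_of_exponent_ge' (by positivity) (div_le_one_of_le₀ hμc hc.le) hc.le hck

theorem sum_pow_div_factorial_le {μ c : ℝ} (hμ : 0 ≤ μ) (hμc : μ ≤ c) (hc : 0 < c) (n : ℕ) :
    ∑ k ∈ (range n).filter (fun k : ℕ => c ≤ (k : ℝ)), μ ^ k / k ! ≤ (μ / c) ^ c * exp c :=
  calc ∑ k ∈ (range n).filter (fun k : ℕ => c ≤ (k : ℝ)), μ ^ k / k !
      ≤ ∑ k ∈ (range n).filter (fun k : ℕ => c ≤ (k : ℝ)), (μ / c) ^ c * (c ^ k / k !) := by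
        refine sum_le_sum fun k hk => ?_
        rw [mul_div_assoc']
        gcongr
        exact pow_le_rpow_div_mul_pow hμ hμc hc (mem_filter.1 hk).2
    _ ≤ (μ / c) ^ c * ∑ k ∈ range n, c ^ k / k ! := by
        rw [← mul_sum]
        gcongr
        exact filter_subset _ _
    _ ≤ (μ / c) ^ c * exp c := by
        gcongr
        exact sum_le_exp_of_nonneg hc.le n

theorem hypergeometric_tail_bound_general (N K d : ℕ) (hN : 0 < N) (hK : K ≤ N)
    (c : ℝ) (hc : 0 < c) :
    (∑ k ∈ (Finset.range (d + 1)).filter (fun k : ℕ => c ≤ (k : ℝ)),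
        ((K.choose k * (N - K).choose (d - k) : ℕ) : ℝ) / ((N.choose d : ℕ) : ℝ))
      ≤ 2 * Real.exp c * (c / ((K : ℝ) * d / N)) ^ (-c) := by
  change ∑ k ∈ (range (d + 1)).filter (fun k : ℕ => c ≤ (k : ℝ)), hypergeomProb N K d k ≤ _
  set μ : ℝ := (K : ℝ) * d / N
  have hμ : 0 ≤ μ := by positivity
  rw [rpow_neg (by positivity), ← inv_rpow (by positivity), inv_div]
  have hbound_nonneg : 0 ≤ exp c * (μ / c) ^ c := by positivity
  rcases le_total μ c with hμc | hcμ
  · calc ∑ k ∈ (range (d + 1)).filter (fun k : ℕ => c ≤ (k : ℝ)), hypergeomProb N K d k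
        ≤ ∑ k ∈ (range (d + 1)).filter (fun k : ℕ => c ≤ (k : ℝ)), μ ^ k / k ! :=
          sum_le_sum fun k hk => hypergeomProb_le_pow_div_factorial hN hK
            (Nat.lt_succ_iff.1 (mem_range.1 (mem_filter.1 hk).1))
      _ ≤ (μ / c) ^ c * exp c := sum_pow_div_factorial_le hμ hμc hc _
      _ ≤ 2 * exp c * (μ / c) ^ c := by linarith
  · calc ∑ k ∈ (range (d + 1)).filter (fun k : ℕ => c ≤ (k : ℝ)), hypergeomProb N K d k
        ≤ ∑ k ∈ range (d + 1), hypergeomProb N K d k :=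
          sum_le_sum_of_subset_of_nonneg (filter_subset _ _)
            fun k _ _ => hypergeomProb_nonneg N K d k
      _ ≤ 1 := sum_hypergeomProb_le_one hK d
      _ ≤ 2 * exp c * (μ / c) ^ c := by
          have : 1 ≤ exp c * (μ / c) ^ c :=
            one_le_mul_of_one_le_of_one_le (one_le_exp hc.le)
              (one_le_rpow ((one_le_div hc).2 hcμ) hc.le)
          linarith

/-- **Hypergeometric tail bound.** Let `Z` be hypergeometric with parameters `(N, K, d)`
(draw `d` objects without replacement from `N` objects, `K` of which are marked), so
`Pr[Z = k] = C(K,k)·C(N−K,d−k)/C(N,d)`, and let `μ = Kd/N`. Then for every `c > 0`,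
`Pr[Z ≥ c] ≤ 2·e^c·(c/μ)^{−c}`. -/
theorem hypergeometric_tail_bound (N K d : ℕ) (hN : 0 < N) (hK : K ≤ N) (hd : d ≤ N)
    (c : ℝ) (hc : 0 < c) :
    (∑ k ∈ (Finset.range (d + 1)).filter (fun k : ℕ => c ≤ (k : ℝ)),
        ((K.choose k * (N - K).choose (d - k) : ℕ) : ℝ) / ((N.choose d : ℕ) : ℝ))
      ≤ 2 * Real.exp c * (c / ((K : ℝ) * d / N)) ^ (-c) :=
  hypergeometric_tail_bound_general N K d hN hK c hc
end

section
/- Let n be even and consider the welded trees graph structure: two full binary trees of depth n with roots s and t, with vertex layers V₀={s},V₁,…,V_{2n+1}={t}, where layer k has edge set E_k between V_{k−1} and V_k of size |E_k| = 2^k for k ≤ n+1 and |E_k| = 2^{2n+2−k} for k ≥ n+1. Define edge weights w_k = 2^{−2⌈k/2⌉} for 1 ≤ k ≤ n and w_k = 2^{−2(n+2−⌈k/2⌉)} for n+1 ≤ k ≤ 2n+1, and the flow θ assigning value 1/|E_k| = 2^{−k} to every edge of E_k (oriented from V_{k−1} to V_k). Then θ is a unit s–t flow (flow conserved at every internal vertex),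 and its energy Σ_k |E_k| · (1/|E_k|)² / w_k is O(n). -/
/-- **Welded trees flow.** With layer edge-counts `|E_k| = 2^k` for `k ≤ n+1` and
`|E_k| = 2^{2n+2−k}` for `k ≥ n+1`, weights `w_k = 2^{−2⌈k/2⌉}` for `1 ≤ k ≤ n` and
`w_k = 2^{−2(n+2−⌈k/2⌉)}` for `n+1 ≤ k ≤ 2n+1`, the flow assigning `1/|E_k|` to every
edge of `E_k` is a unit `s–t` flow (flow is conserved at every internal vertex: in the
left half each vertex has one parent edge in `E_k` and two child edges in `E_{k+1}`, in
the right half two edges in `E_k` and one in `E_{k+1}`), and its energy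
`Σ_k |E_k|·(1/|E_k|)²/w_k` is `O(n)`. -/
theorem welded_trees_flow_conservation_and_energy :
    ∃ C : ℝ, 0 < C ∧
      ∀ (n : ℕ), Even n → 0 < n →
      ∀ (Ecard : ℕ → ℕ) (w θ : ℕ → ℝ),
        (∀ k, 1 ≤ k → k ≤ n + 1 → Ecard k = 2 ^ k) →
        (∀ k, n + 1 ≤ k → k ≤ 2 * n + 1 → Ecard k = 2 ^ (2 * n + 2 - k)) →
        (∀ k, 1 ≤ k → k ≤ n → w k = (2 : ℝ) ^ (-(2 * (((k : ℤ) + 1) / 2)))) →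
        (∀ k, n + 1 ≤ k → k ≤ 2 * n + 1 →
            w k = (2 : ℝ) ^ (-(2 * ((n : ℤ) + 2 - (((k : ℤ) + 1) / 2))))) →
        (∀ k, θ k = 1 / (Ecard k : ℝ)) →
        -- unit flow out of the root `s`
        ((Ecard 1 : ℝ) * θ 1 = 1 ∧
         -- flow conservation at internal vertices of the left half
         (∀ k, 1 ≤ k → k ≤ n → θ k = 2 * θ (k + 1)) ∧
         -- flow conservation at internal vertices of the right half
         (∀ k, n + 1 ≤ k → k ≤ 2 * n → 2 * θ k = θ (k + 1)) ∧
         -- the energy of the flow is `O(n)`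
         (∑ k ∈ Finset.Icc 1 (2 * n + 1), (Ecard k : ℝ) * θ k ^ 2 / w k) ≤ C * n) := by
  refine ⟨12, by norm_num, ?_⟩
  intro n _ hn Ecard w θ hEL hER hwL hwR hθ
  have hE1 : Ecard 1 = 2 := by rw [hEL 1 le_rfl (by omega)]; norm_num
  have h20 : (2:ℝ) ≠ 0 := two_ne_zero
  refine ⟨?_, ?_, ?_, ?_⟩
  · rw [hθ, hE1]; norm_num
  · intro k hk1 hkn
    rw [hθ, hθ, hEL k hk1 (by omega), hEL (k+1) (by omega) (by omega)]
    push_cast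
    rw [pow_succ]
    have : (2:ℝ)^k ≠ 0 := by positivity
    field_simp
  · intro k hk1 hkn
    rw [hθ, hθ, hER k hk1 (by omega), hER (k+1) (by omega) (by omega)]
    have h1 : 2 * n + 2 - k = (2 * n + 2 - (k+1)) + 1 := by omega
    rw [h1]
    push_cast
    rw [pow_succ]
    have : (2:ℝ)^(2*n+2-(k+1)) ≠ 0 := by positivity
    field_simp
  · have key : ∀ k ∈ Finset.Icc 1 (2 * n + 1), (Ecard k : ℝ) * θ k ^ 2 / w k ≤ 4 := by
      intro k hk
      simp only [Finset.mem_Icc] at hk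
      rcases le_or_gt k n with hkn | hkn
      · rw [hθ, hEL k hk.1 (by omega), hwL k hk.1 hkn]
        push_cast
        rw [one_div, ← zpow_natCast (2:ℝ) k, ← zpow_neg,
          ← zpow_natCast ((2:ℝ)^(-(k:ℤ))) 2, ← zpow_mul,
          ← zpow_add₀ h20, ← zpow_sub₀ h20,
          show (4:ℝ) = (2:ℝ)^(2:ℤ) by norm_num]
        apply zpow_le_zpow_right₀ one_le_two
        push_cast
        omega
      · rw [hθ, hER k (by omega) hk.2, hwR k (by omega) hk.2]
        push_cast
        rw [one_div, ← zpow_natCast (2:ℝ) (2*n+2-k), ← zpow_neg,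
          ← zpow_natCast ((2:ℝ)^(-((2*n+2-k : ℕ):ℤ))) 2, ← zpow_mul,
          ← zpow_add₀ h20, ← zpow_sub₀ h20,
          show (4:ℝ) = (2:ℝ)^(2:ℤ) by norm_num]
        apply zpow_le_zpow_right₀ one_le_two
        push_cast
        omega
    have h1n : (1:ℝ) ≤ n := by exact_mod_cast hn
    calc ∑ k ∈ Finset.Icc 1 (2 * n + 1), (Ecard k : ℝ) * θ k ^ 2 / w k
        ≤ (Finset.Icc 1 (2 * n + 1)).card • (4:ℝ) := Finset.sum_le_card_nsmul _ _ _ key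
      _ = (2 * n + 1 : ℕ) * 4 := by rw [Nat.card_Icc]; simp
      _ ≤ 12 * n := by push_cast; nlinarith
end

section
/- With the setup of the previous statement (unitaries U₀,…,U_{T−1}, states wᵗ with w⁰ = |z₀⟩ and wᵗ = U_{t−1}w^{t−1}), define for odd t, ψ_t^z = |z⟩|t⟩ − U_t|z⟩|t+1⟩, and the telescoping combination w_A + w_B where w_A = Σ_{odd t ∈ [T−1]} Σ_z ⟨z, wᵗ⟩ ψ_t^z and w_B = ψ_0^{z₀} + Σ_{even t ∈ [T−1], t ≥ 2} Σ_z ⟨z, wᵗ⟩ ψ_t^z. Then w_A + w_B = |z₀⟩|0⟩ − w^T|T⟩. -/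
section aux
variable {M : Type*} [AddCommGroup M]

lemma tele_aux : ∀ (n : ℕ) (G : Fin (n+1) → M),
    ∑ t : Fin n, (G t.castSucc - G t.succ) = G 0 - G (Fin.last n) := by
  intro n
  induction n with
  | zero => simp
  | succ n ih =>
    intro G
    rw [Fin.sum_univ_castSucc]
    have h := ih (fun s => G s.castSucc)
    simp only [← Fin.succ_castSucc] at h
    rw [h, Fin.castSucc_zero, Fin.succ_last]
    abel
end aux

/-- **Telescoping identity for algorithm states.** With unitaries `U₀,…,U_{T−1}` on
`ℂ^Z`, `w⁰ = |z₀⟩`, `wᵗ = U_{t−1}w^{t−1}`, and algorithm states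
`ψ_t^z = |z⟩|t⟩ − U_t|z⟩|t+1⟩` in `ℂ^{Z×(T+1)}`, the combination
`w_A + w_B`, where `w_A = Σ_{odd t ∈ [T−1]} Σ_z ⟨z,wᵗ⟩ ψ_t^z` and
`w_B = ψ_0^{z₀} + Σ_{even t ∈ [T−1], t ≥ 2} Σ_z ⟨z,wᵗ⟩ ψ_t^z`, equals
`|z₀⟩|0⟩ − w^T|T⟩`. -/
theorem algorithm_states_collapse
    {Z : Type*} [Fintype Z] [DecidableEq Z] (T : ℕ) (hT : 0 < T)
    (U : Fin T → (EuclideanSpace ℂ Z ≃ₗᵢ[ℂ] EuclideanSpace ℂ Z))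
    (z₀ : Z)
    (w : Fin (T + 1) → EuclideanSpace ℂ Z)
    (hw0 : w 0 = EuclideanSpace.single z₀ 1)
    (hw : ∀ t : Fin T, w t.succ = U t (w t.castSucc))
    (emb : EuclideanSpace ℂ Z → Fin (T + 1) → EuclideanSpace ℂ (Z × Fin (T + 1)))
    (hemb : ∀ x t p, emb x t p = if p.2 = t then x p.1 else 0)
    (ψ : Fin T → Z → EuclideanSpace ℂ (Z × Fin (T + 1)))
    (hψ : ∀ t z, ψ t z = emb (EuclideanSpace.single z 1) t.castSucc
        - emb (U t (EuclideanSpace.single z 1)) t.succ) :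
    (∑ t ∈ Finset.univ.filter (fun t : Fin T => Odd (t : ℕ)),
        ∑ z : Z, w t.castSucc z • ψ t z)
    + (ψ ⟨0, hT⟩ z₀
       + ∑ t ∈ Finset.univ.filter (fun t : Fin T => 1 ≤ (t : ℕ) ∧ Even (t : ℕ)),
          ∑ z : Z, w t.castSucc z • ψ t z)
    = emb (EuclideanSpace.single z₀ 1) 0 - emb (w (Fin.last T)) (Fin.last T) := by
  classical
  set f : Fin T → EuclideanSpace ℂ (Z × Fin (T + 1)) :=
    fun t => ∑ z : Z, w t.castSucc z • ψ t z with hf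
  have sumApplyZ : ∀ (v : Z → EuclideanSpace ℂ Z) (p : Z),
      (∑ z : Z, v z) p = ∑ z : Z, v z p :=
    fun v p => by rw [WithLp.ofLp_sum]; exact Finset.sum_apply p Finset.univ fun c => v c
  have sumApplyP : ∀ (v : Z → EuclideanSpace ℂ (Z × Fin (T+1))) (p : Z × Fin (T+1)),
      (∑ z : Z, v z) p = ∑ z : Z, v z p :=
    fun v p => by rw [WithLp.ofLp_sum]; exact Finset.sum_apply p Finset.univ fun c => v c
  have hdecomp : ∀ s : Fin (T+1), w s = ∑ z : Z, w s z • EuclideanSpace.single z 1 := by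
    intro s
    ext p
    rw [sumApplyZ]
    simp [PiLp.smul_apply, EuclideanSpace.single_apply, mul_ite, Finset.sum_ite_eq]
  have key : ∀ t : Fin T, f t = emb (w t.castSucc) t.castSucc - emb (w t.succ) t.succ := by
    intro t
    have h1 : emb (w t.castSucc) t.castSucc
        = ∑ z : Z, w t.castSucc z • emb (EuclideanSpace.single z 1) t.castSucc := by
      ext p
      rw [hemb, sumApplyP]
      simp only [PiLp.smul_apply, hemb, smul_eq_mul, mul_ite, mul_zero]
      split
      · simp [EuclideanSpace.single_apply, mul_ite, Finset.sum_ite_eq]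
      · simp
    have hU : w t.succ = ∑ z : Z, w t.castSucc z • U t (EuclideanSpace.single z 1) := by
      conv_lhs => rw [hw t, hdecomp t.castSucc]
      simp [map_sum, map_smul]
    have h2 : emb (w t.succ) t.succ
        = ∑ z : Z, w t.castSucc z • emb (U t (EuclideanSpace.single z 1)) t.succ := by
      ext p
      rw [hemb, sumApplyP]
      simp only [PiLp.smul_apply, hemb, smul_eq_mul, mul_ite, mul_zero]
      split
      · rw [hU, sumApplyZ]
        simp [PiLp.smul_apply]
      · simp
    rw [hf]
    simp only [hψ, smul_sub]
    rw [Finset.sum_sub_distrib, ← h1, ← h2]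
  have h0cast : (⟨0, hT⟩ : Fin T).castSucc = (0 : Fin (T+1)) := rfl
  have hpsi0 : ψ ⟨0, hT⟩ z₀ = f ⟨0, hT⟩ := by
    rw [hf]
    simp only [h0cast, hw0]
    rw [Finset.sum_congr rfl (fun z _ => by
      rw [show (EuclideanSpace.single z₀ 1 : EuclideanSpace ℂ Z) z = if z = z₀ then 1 else 0 from
        EuclideanSpace.single_apply z₀ 1 z, ite_smul, one_smul, zero_smul])]
    rw [Finset.sum_ite_eq' Finset.univ z₀ (fun z => ψ ⟨0, hT⟩ z)]
    simp
  have hsplit : (∑ t ∈ Finset.univ.filter (fun t : Fin T => Odd (t : ℕ)), f t)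
      + (f ⟨0, hT⟩
        + ∑ t ∈ Finset.univ.filter (fun t : Fin T => 1 ≤ (t : ℕ) ∧ Even (t : ℕ)), f t)
      = ∑ t : Fin T, f t := by
    rw [← Finset.sum_filter_add_sum_filter_not Finset.univ (fun t : Fin T => Odd (t : ℕ)) f]
    congr 1
    have hins : Finset.univ.filter (fun t : Fin T => ¬ Odd (t : ℕ))
        = insert (⟨0, hT⟩ : Fin T)
            (Finset.univ.filter (fun t : Fin T => 1 ≤ (t : ℕ) ∧ Even (t : ℕ))) := by
      ext t
      simp only [Finset.mem_filter, Finset.mem_insert, Finset.mem_univ, true_and,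
        Nat.not_odd_iff_even]
      constructor
      · intro he
        rcases Nat.eq_zero_or_pos (t : ℕ) with h | h
        · left; exact Fin.ext h
        · right; exact ⟨h, he⟩
      · rintro (rfl | ⟨_, he⟩)
        · exact Even.zero
        · exact he
    rw [hins, Finset.sum_insert (by simp)]
  rw [hpsi0, hsplit]
  rw [Finset.sum_congr rfl (fun t _ => key t)]
  rw [tele_aux T (fun s => emb (w s) s)]
  rw [hw0]
end

section
/- Let T ≥ 1, Θ ∈ (0, π), and let U be a unitary with spectral decomposition Σ_j e^{iθ_j} Π_j, θ_j ∈ (−π, π]. For a unit vector ψ₀, the phase-0 probability p₀ = (1/T²)‖Σ_{t=0}^{T−1} U^t ψ₀‖² satisfies p₀ ≤ (π²/4)‖Λ_Θ ψ₀‖² + π²/(T²Θ²), where Λ_Θ projects onto eigenspaces with |θ_j| ≤ Θ. -/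
open scoped Classical

lemma pen_norm_sq_sum_of_orth {H : Type*} [NormedAddCommGroup H] [InnerProductSpace ℂ H]
    {J : Type*} [Fintype J] (s : Finset J) (v : J → H)
    (h : ∀ i j, i ≠ j → (inner ℂ (v i) (v j) : ℂ) = 0) :
    ‖∑ j ∈ s, v j‖ ^ 2 = ∑ j ∈ s, ‖v j‖ ^ 2 := by
  have key : (inner ℂ (∑ j ∈ s, v j) (∑ j ∈ s, v j) : ℂ) = ∑ j ∈ s, inner ℂ (v j) (v j) := by
    rw [inner_sum]
    refine Finset.sum_congr rfl fun j hj => ?_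
    rw [sum_inner]
    refine Finset.sum_eq_single_of_mem j hj fun i hi hij => h i j hij
  have h2 : RCLike.re (inner ℂ (∑ j ∈ s, v j) (∑ j ∈ s, v j) : ℂ)
      = ∑ j ∈ s, RCLike.re (inner ℂ (v j) (v j) : ℂ) := by
    rw [key, map_sum]
  simpa only [inner_self_eq_norm_sq] using h2

lemma pen_exp_sub_one_norm_ge {x : ℝ} (hx : |x| ≤ Real.pi) :
    2 / Real.pi * |x| ≤ ‖Complex.exp (x * Complex.I) - 1‖ := by
  have hsq : ‖Complex.exp (x * Complex.I) - 1‖ ^ 2 = 2 - 2 * Real.cos x := by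
    rw [Complex.sq_norm, Complex.normSq_apply]
    simp [Complex.exp_ofReal_mul_I_re, Complex.exp_ofReal_mul_I_im]
    nlinarith [Real.sin_sq_add_cos_sq x]
  have h4 : ‖Complex.exp (x * Complex.I) - 1‖ ^ 2 = 4 * Real.sin (x / 2) ^ 2 := by
    rw [hsq, Real.sin_sq_eq_half_sub]
    ring_nf
  have hhalf : |x / 2| ≤ Real.pi / 2 := by
    rw [abs_div]
    simp only [abs_two]
    linarith [abs_nonneg x]
  have hjord := Real.mul_abs_le_abs_sin hhalf
  have heq : 2 / Real.pi * |x| = 2 * (2 / Real.pi * |x / 2|) := by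
    rw [abs_div]; simp only [abs_two]; field_simp
  rw [heq]
  have h1 : 2 * (2 / Real.pi * |x / 2|) ≤ 2 * |Real.sin (x / 2)| := by linarith
  refine h1.trans ?_
  have : (2 * |Real.sin (x / 2)|) ^ 2 = ‖Complex.exp (x * Complex.I) - 1‖ ^ 2 := by
    rw [h4, mul_pow, sq_abs]; ring
  nlinarith [norm_nonneg (Complex.exp (x * Complex.I) - 1), abs_nonneg (Real.sin (x / 2))]

/-- **Negative-case upper bound for phase estimation.** For `T ≥ 1`, `Θ ∈ (0, π)` and
`U = Σ_j e^{iθ_j} P_j` with `θ_j ∈ (−π, π]`, the phase-`0` probability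
`p₀ = (1/T²)‖Σ_{t<T} Uᵗψ₀‖²` of a unit vector `ψ₀` satisfies
`p₀ ≤ (π²/4)‖Λ_Θ ψ₀‖² + π²/(T²Θ²)`, where `Λ_Θ = Σ_{j : |θ_j| ≤ Θ} P_j`. -/
theorem phase_estimation_negative_upper_bound
    {H : Type*} [NormedAddCommGroup H] [InnerProductSpace ℂ H] [FiniteDimensional ℂ H]
    {J : Type*} [Fintype J]
    (θ : J → ℝ) (hθ : ∀ j, θ j ∈ Set.Ioc (-Real.pi) Real.pi)
    (P : J → H →L[ℂ] H)
    (hsa : ∀ j, ∀ x y : H, (inner ℂ ((P j) x) y : ℂ) = inner ℂ x ((P j) y))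
    (hidem : ∀ j, P j * P j = P j)
    (horth : ∀ i j, i ≠ j → P i * P j = 0)
    (hres : ∑ j, P j = 1)
    (U : H →L[ℂ] H)
    (hU : U = ∑ j, Complex.exp (θ j * Complex.I) • P j)
    (ψ₀ : H) (hψ₀ : ‖ψ₀‖ = 1)
    (T : ℕ) (hT : 1 ≤ T)
    (Θ : ℝ) (hΘ : Θ ∈ Set.Ioo 0 Real.pi) :
    ‖(T : ℂ)⁻¹ • ∑ t ∈ Finset.range T, (U ^ t) ψ₀‖ ^ 2
      ≤ Real.pi ^ 2 / 4 *
          ‖((∑ j ∈ Finset.univ.filter (fun j => |θ j| ≤ Θ), P j)) ψ₀‖ ^ 2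
        + Real.pi ^ 2 / ((T : ℝ) ^ 2 * Θ ^ 2) := by
  obtain ⟨hΘ0, hΘπ⟩ := hΘ
  have hπ := Real.pi_pos
  set v : J → H := fun j => P j ψ₀ with hv
  have hPP : ∀ i j, i ≠ j → ∀ x : H, P i (P j x) = 0 := by
    intro i j hij x
    have h0 := horth i j hij
    calc P i (P j x) = (P i * P j) x := rfl
      _ = 0 := by rw [h0]; rfl
  have hvorth : ∀ i j, i ≠ j → (inner ℂ (v i) (v j) : ℂ) = 0 := by
    intro i j hij
    calc (inner ℂ (P i ψ₀) (P j ψ₀) : ℂ) = inner ℂ ψ₀ (P i (P j ψ₀)) := hsa i _ _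
      _ = 0 := by rw [hPP i j hij]; exact inner_zero_right _
  set c : J → ℂ := fun j => ∑ t ∈ Finset.range T, Complex.exp ((t * θ j : ℝ) * Complex.I)
    with hc
  have hPow : ∀ t : ℕ,
      (U ^ t : H →L[ℂ] H) = ∑ j, Complex.exp ((t * θ j : ℝ) * Complex.I) • P j := by
    intro t
    induction t with
    | zero => simpa using hres.symm
    | succ t ih =>
      rw [pow_succ, ih, hU, Finset.sum_mul_sum]
      refine Finset.sum_congr rfl fun i _ => ?_
      rw [Finset.sum_eq_single i]
      · rw [smul_mul_smul_comm, hidem i, ← Complex.exp_add]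
        congr 2
        push_cast
        ring
      · intro j _ hji
        rw [smul_mul_smul_comm, horth i j (Ne.symm hji), smul_zero]
      · intro h; exact absurd (Finset.mem_univ i) h
  have hS : ∑ t ∈ Finset.range T, (U ^ t) ψ₀ = ∑ j, c j • v j := by
    simp_rw [hPow, ContinuousLinearMap.sum_apply, ContinuousLinearMap.smul_apply]
    rw [Finset.sum_comm]
    simp_rw [← Finset.sum_smul]
    rfl
  have hw : ∀ i j, i ≠ j → (inner ℂ (c i • v i) (c j • v j) : ℂ) = 0 := by
    intro i j hij
    rw [inner_smul_left, inner_smul_right, hvorth i j hij, mul_zero, mul_zero]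
  have hnorm : ‖∑ j, c j • v j‖ ^ 2 = ∑ j, ‖c j‖ ^ 2 * ‖v j‖ ^ 2 := by
    rw [pen_norm_sq_sum_of_orth Finset.univ _ hw]
    exact Finset.sum_congr rfl fun j _ => by rw [norm_smul, mul_pow]
  have hsumv : ∑ j, v j = ψ₀ := by
    have h0 := congrArg (fun A : H →L[ℂ] H => A ψ₀) hres
    simpa [ContinuousLinearMap.sum_apply] using h0
  have htot : ∑ j, ‖v j‖ ^ 2 = 1 := by
    have h0 := pen_norm_sq_sum_of_orth Finset.univ v hvorth
    rw [hsumv, hψ₀, one_pow] at h0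
    exact h0.symm
  have hΛnorm : ‖((∑ j ∈ Finset.univ.filter (fun j => |θ j| ≤ Θ), P j)) ψ₀‖ ^ 2
      = ∑ j ∈ Finset.univ.filter (fun j => |θ j| ≤ Θ), ‖v j‖ ^ 2 := by
    rw [ContinuousLinearMap.sum_apply]
    exact pen_norm_sq_sum_of_orth _ v hvorth
  have hT0 : (0:ℝ) < (T:ℝ) := by exact_mod_cast hT
  have hcle : ∀ j, ‖c j‖ ≤ (T:ℝ) := by
    intro j
    calc ‖c j‖ ≤ ∑ t ∈ Finset.range T, ‖Complex.exp ((t * θ j : ℝ) * Complex.I)‖ :=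
          norm_sum_le _ _
      _ = ∑ _t ∈ Finset.range T, (1:ℝ) := by
          refine Finset.sum_congr rfl fun t _ => ?_
          rw [Complex.norm_exp_ofReal_mul_I]
      _ = (T:ℝ) := by simp
  have hclarge : ∀ j, ¬ |θ j| ≤ Θ → ‖c j‖ ≤ Real.pi / Θ := by
    intro j hj
    push_neg at hj
    set z := Complex.exp ((θ j : ℝ) * Complex.I) with hz
    have hθj := hθ j
    have habs : |θ j| ≤ Real.pi := abs_le.mpr ⟨by linarith [hθj.1], hθj.2⟩
    have hlow : 2 / Real.pi * |θ j| ≤ ‖z - 1‖ := pen_exp_sub_one_norm_ge habs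
    have hlow' : 2 / Real.pi * Θ ≤ ‖z - 1‖ := by
      refine le_trans ?_ hlow
      have : 0 ≤ 2 / Real.pi := by positivity
      nlinarith
    have hden : 0 < 2 / Real.pi * Θ := by positivity
    have hzne : z ≠ 1 := by
      intro h
      rw [h, sub_self, norm_zero] at hlow'
      linarith
    have hcz : c j = ∑ t ∈ Finset.range T, z ^ t := by
      refine Finset.sum_congr rfl fun t _ => ?_
      rw [hz, ← Complex.exp_nat_mul]
      congr 1
      push_cast
      ring
    rw [hcz, geom_sum_eq hzne]
    have hznorm : ‖z‖ = 1 := by rw [hz, Complex.norm_exp_ofReal_mul_I]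
    have hnum : ‖z ^ T - 1‖ ≤ 2 := by
      calc ‖z ^ T - 1‖ ≤ ‖z ^ T‖ + ‖(1:ℂ)‖ := norm_sub_le _ _
        _ = 2 := by rw [norm_pow, hznorm, one_pow, norm_one]; norm_num
    calc ‖(z ^ T - 1) / (z - 1)‖ = ‖z ^ T - 1‖ / ‖z - 1‖ := norm_div _ _
      _ ≤ 2 / (2 / Real.pi * Θ) := div_le_div₀ (by norm_num) hnum hden hlow'
      _ = Real.pi / Θ := by field_simp
  have hL : ‖(T : ℂ)⁻¹ • ∑ t ∈ Finset.range T, (U ^ t) ψ₀‖ ^ 2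
      = ∑ j, ‖c j‖ ^ 2 * ‖v j‖ ^ 2 / (T:ℝ) ^ 2 := by
    rw [norm_smul, hS, mul_pow, hnorm, norm_inv, Complex.norm_natCast, Finset.mul_sum]
    refine Finset.sum_congr rfl fun j _ => ?_
    field_simp
  rw [hL, ← Finset.sum_filter_add_sum_filter_not Finset.univ (fun j => |θ j| ≤ Θ)]
  have hsmall : ∑ j ∈ Finset.univ.filter (fun j => |θ j| ≤ Θ),
      ‖c j‖ ^ 2 * ‖v j‖ ^ 2 / (T:ℝ) ^ 2
      ≤ Real.pi ^ 2 / 4 *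
          ‖((∑ j ∈ Finset.univ.filter (fun j => |θ j| ≤ Θ), P j)) ψ₀‖ ^ 2 := by
    rw [hΛnorm]
    have h1 : ∑ j ∈ Finset.univ.filter (fun j => |θ j| ≤ Θ),
        ‖c j‖ ^ 2 * ‖v j‖ ^ 2 / (T:ℝ) ^ 2
        ≤ ∑ j ∈ Finset.univ.filter (fun j => |θ j| ≤ Θ), ‖v j‖ ^ 2 := by
      refine Finset.sum_le_sum fun j _ => ?_
      have hc2 : ‖c j‖ ^ 2 ≤ (T:ℝ) ^ 2 := by
        nlinarith [hcle j, norm_nonneg (c j)]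
      rw [div_le_iff₀ (by positivity)]
      nlinarith [sq_nonneg ‖v j‖]
    have hM : (0:ℝ) ≤ ∑ j ∈ Finset.univ.filter (fun j => |θ j| ≤ Θ), ‖v j‖ ^ 2 :=
      Finset.sum_nonneg fun j _ => sq_nonneg _
    have hπ2 : (1:ℝ) ≤ Real.pi ^ 2 / 4 := by nlinarith [Real.pi_gt_three]
    calc ∑ j ∈ Finset.univ.filter (fun j => |θ j| ≤ Θ),
          ‖c j‖ ^ 2 * ‖v j‖ ^ 2 / (T:ℝ) ^ 2
        ≤ ∑ j ∈ Finset.univ.filter (fun j => |θ j| ≤ Θ), ‖v j‖ ^ 2 := h1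
      _ = 1 * ∑ j ∈ Finset.univ.filter (fun j => |θ j| ≤ Θ), ‖v j‖ ^ 2 := (one_mul _).symm
      _ ≤ Real.pi ^ 2 / 4 * ∑ j ∈ Finset.univ.filter (fun j => |θ j| ≤ Θ), ‖v j‖ ^ 2 :=
          mul_le_mul_of_nonneg_right hπ2 hM
  have hcompl : ∑ j ∈ Finset.univ.filter (fun j => ¬ |θ j| ≤ Θ), ‖v j‖ ^ 2 ≤ 1 := by
    rw [← htot]
    exact Finset.sum_le_sum_of_subset_of_nonneg (Finset.filter_subset _ _)
      (fun j _ _ => sq_nonneg _)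
  have hlarge : ∑ j ∈ Finset.univ.filter (fun j => ¬ |θ j| ≤ Θ),
      ‖c j‖ ^ 2 * ‖v j‖ ^ 2 / (T:ℝ) ^ 2
      ≤ Real.pi ^ 2 / ((T:ℝ) ^ 2 * Θ ^ 2) := by
    have h1 : ∀ j ∈ Finset.univ.filter (fun j => ¬ |θ j| ≤ Θ),
        ‖c j‖ ^ 2 * ‖v j‖ ^ 2 / (T:ℝ) ^ 2
        ≤ Real.pi ^ 2 / ((T:ℝ) ^ 2 * Θ ^ 2) * ‖v j‖ ^ 2 := by
      intro j hj
      have hj' : ¬ |θ j| ≤ Θ := (Finset.mem_filter.mp hj).2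
      have hc2 : ‖c j‖ ^ 2 ≤ Real.pi ^ 2 / Θ ^ 2 := by
        have h0 := hclarge j hj'
        have := pow_le_pow_left₀ (norm_nonneg (c j)) h0 2
        rwa [div_pow] at this
      calc ‖c j‖ ^ 2 * ‖v j‖ ^ 2 / (T:ℝ) ^ 2
          ≤ (Real.pi ^ 2 / Θ ^ 2) * ‖v j‖ ^ 2 / (T:ℝ) ^ 2 := by gcongr
        _ = Real.pi ^ 2 / ((T:ℝ) ^ 2 * Θ ^ 2) * ‖v j‖ ^ 2 := by
            ring
    calc ∑ j ∈ Finset.univ.filter (fun j => ¬ |θ j| ≤ Θ),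
          ‖c j‖ ^ 2 * ‖v j‖ ^ 2 / (T:ℝ) ^ 2
        ≤ ∑ j ∈ Finset.univ.filter (fun j => ¬ |θ j| ≤ Θ),
          Real.pi ^ 2 / ((T:ℝ) ^ 2 * Θ ^ 2) * ‖v j‖ ^ 2 := Finset.sum_le_sum h1
      _ = Real.pi ^ 2 / ((T:ℝ) ^ 2 * Θ ^ 2) *
          ∑ j ∈ Finset.univ.filter (fun j => ¬ |θ j| ≤ Θ), ‖v j‖ ^ 2 := by
            rw [Finset.mul_sum]
      _ ≤ Real.pi ^ 2 / ((T:ℝ) ^ 2 * Θ ^ 2) * 1 :=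
            mul_le_mul_of_nonneg_left hcompl (by positivity)
      _ = Real.pi ^ 2 / ((T:ℝ) ^ 2 * Θ ^ 2) := mul_one _
  exact add_le_add hsmall hlarge
end
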